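/- Stein's lemma, multivariate isotropic case: let d ≥ 1, σ > 0, and let f : ℝ^d → ℝ be differentiable and L-Lipschitz for some L ≥ 0. Then σ² · ∫ ∇f(z) dγ_σ(z) = ∫ f(z) · z dγ_σ(z), as an equality of vectors in ℝ^d (Bochner integrals). -/

import Mathlib

open MeasureTheory ProbabilityTheory RealInnerProductSpace

/-- The centered isotropic Gaussian measure `N(0, σ² I_d)` on `ℝ^d`, realized as the
`d`-fold product of the one-dimensional Gaussian `N(0, σ²)`. -/
noncomputable def gaussE (d : ℕ) (σ : ℝ) : Measure (EuclideanSpace ℝ (Fin d)) :=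
  (Measure.pi fun _ : Fin d => gaussianReal 0 ⟨σ ^ 2, sq_nonneg σ⟩).map
    (MeasurableEquiv.toLp 2 (Fin d → ℝ))

/-!
Along the `i`-th coordinate axis the isotropic Gaussian factors as `N(0, σ²)` times the law of the
remaining coordinates. The one-dimensional density satisfies `p' x = -(x / σ²) * p x`, so for `g`
Lipschitz the function `g * p` is integrable with integrable derivative `g' * p - g * x * p / σ²`,
whose integral over `ℝ` therefore vanishes: `σ² ∫ g' dN(0, σ²) = ∫ g x * x dN(0, σ²)`. Applying this
on every line parallel to the `i`-th axis and integrating over the other coordinates gives the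
`i`-th coordinate of the identity. All integrands are integrable because a Lipschitz `f` grows at
most linearly and Gaussians have finite second moments.
-/

open Function Set
open scoped NNReal ENNReal

theorem LipschitzWith.memLp_of_memLp_id {E F : Type*} [NormedAddCommGroup E] [MeasurableSpace E]
    [NormedAddCommGroup F] {μ : Measure E} [IsFiniteMeasure μ] {p : ℝ≥0∞} {K : ℝ≥0} {f : E → F}
    (hf : LipschitzWith K f) (hμ : MemLp id p μ) : MemLp f p μ := by
  have h0 : LipschitzWith K (fun z => f z - f 0) := by
    simpa using hf.sub (LipschitzWith.const (f 0))
  convert (h0.comp_memLp (sub_self _) hμ).add (memLp_const (f 0)) using 1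
  ext z
  simp

section Pi

variable {ι : Type*} [Fintype ι] [DecidableEq ι] {X : ι → Type*} [∀ i, MeasurableSpace (X i)]
  (μ : ∀ i, Measure (X i)) [∀ i, IsProbabilityMeasure (μ i)]

theorem MeasureTheory.measurePreserving_update_pi (i : ι) :
    MeasurePreserving (fun p : (∀ j, X j) × X i => update p.1 i p.2)
      ((Measure.pi μ).prod (μ i)) (Measure.pi μ) := by
  refine ⟨by fun_prop, (Measure.pi_eq fun s hs => ?_).symm⟩
  have hpre : (fun p : (∀ j, X j) × X i => update p.1 i p.2) ⁻¹' univ.pi s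
      = univ.pi (update s i univ) ×ˢ s i := by
    ext ⟨x, t⟩
    simp only [mem_preimage, mem_univ_pi, mem_prod]
    constructor
    · intro h
      refine ⟨fun j => ?_, by simpa using h i⟩
      rcases eq_or_ne j i with rfl | hj
      · simp
      · simpa [hj] using h j
    · rintro ⟨hx, ht⟩ j
      rcases eq_or_ne j i with rfl | hj
      · simpa using ht
      · simpa [hj] using hx j
  rw [Measure.map_apply (by fun_prop) (.univ_pi hs), hpre, Measure.prod_prod, Measure.pi_pi,
    ← Finset.prod_erase_mul _ _ (Finset.mem_univ i), update_self, measure_univ, mul_one,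
    ← Finset.prod_erase_mul _ _ (Finset.mem_univ i)]
  congr 1
  exact Finset.prod_congr rfl fun j hj => by rw [update_of_ne (Finset.ne_of_mem_erase hj)]

theorem MeasureTheory.integral_pi_eq_integral_integral_update {E : Type*} [NormedAddCommGroup E]
    [NormedSpace ℝ E] (i : ι) {G : (∀ j, X j) → E} (hG : Integrable G (Measure.pi μ)) :
    ∫ x, G x ∂Measure.pi μ = ∫ x, ∫ t, G (update x i t) ∂μ i ∂Measure.pi μ := by
  have h := measurePreserving_update_pi μ i
  conv_lhs => rw [← h.map_eq]
  rw [integral_map h.measurable.aemeasurable (by rw [h.map_eq]; exact hG.1)]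
  exact integral_prod _ (h.integrable_comp_of_integrable hG)

end Pi

section Lipschitz

variable {E : Type*} [NormedAddCommGroup E] [NormedSpace ℝ E] [MeasurableSpace E]
  {μ : Measure E} [IsFiniteMeasure μ] {K : ℝ≥0} {f : E → ℝ}

theorem LipschitzWith.integrable_smul_id (hf : LipschitzWith K f) (hμ : MemLp id 2 μ) :
    Integrable (fun z => f z • z) μ :=
  (hμ.smul (hf.memLp_of_memLp_id hμ) (p := 2) (r := 1)).integrable le_rfl

theorem LipschitzWith.integrable_fderiv_apply [OpensMeasurableSpace E] (hf : LipschitzWith K f)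
    (u : E) : Integrable (fun z => fderiv ℝ f z u) μ :=
  Integrable.of_bound (measurable_fderiv_apply_const ℝ f u).aestronglyMeasurable (K * ‖u‖)
    (ae_of_all _ fun _ => (ContinuousLinearMap.le_opNorm _ _).trans
      (by gcongr; exact norm_fderiv_le_of_lipschitz ℝ hf))

end Lipschitz

namespace ProbabilityTheory

theorem hasDerivAt_gaussianPDFReal (m : ℝ) (v : ℝ≥0) (x : ℝ) :
    HasDerivAt (gaussianPDFReal m v) (-((x - m) / v) * gaussianPDFReal m v x) x := by
  have h : HasDerivAt (fun y => -(y - m) ^ 2 / (2 * v)) (-(2 * (x - m)) / (2 * v)) x := by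
    simpa using (((hasDerivAt_id x).sub_const m).pow 2).neg.div_const (2 * (v : ℝ))
  rw [gaussianPDFReal_def]
  refine (h.exp.const_mul (√(2 * Real.pi * v))⁻¹).congr_deriv ?_
  ring

theorem _root_.MeasureTheory.Integrable.gaussianPDFReal_mul {m : ℝ} {v : ℝ≥0} (hv : v ≠ 0)
    {h : ℝ → ℝ} (hh : Integrable h (gaussianReal m v)) :
    Integrable (fun x => gaussianPDFReal m v x * h x) := by
  rw [gaussianReal_of_var_ne_zero _ hv, integrable_withDensity_iff (measurable_gaussianPDF _ _)
    (ae_of_all _ fun _ => gaussianPDF_lt_top)] at hh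
  refine hh.congr (ae_of_all _ fun x => ?_)
  simp [gaussianPDF, mul_comm, gaussianPDFReal_nonneg]

theorem gaussianReal_stein (v : ℝ≥0) {g g' : ℝ → ℝ} (hg : ∀ x, HasDerivAt g (g' x) x)
    (hg' : Integrable g' (gaussianReal 0 v)) (hgi : Integrable g (gaussianReal 0 v))
    (hgx : Integrable (fun x => g x * x) (gaussianReal 0 v)) :
    v * ∫ x, g' x ∂gaussianReal 0 v = ∫ x, g x * x ∂gaussianReal 0 v := by
  rcases eq_or_ne v 0 with rfl | hv
  · simp
  set p := gaussianPDFReal 0 v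
  have hpg' := hg'.gaussianPDFReal_mul hv
  have hpgx := (hgx.gaussianPDFReal_mul hv).const_mul (v : ℝ)⁻¹
  have hibp : ∫ x, (p x * g' x - (v : ℝ)⁻¹ * (p x * (g x * x))) = 0 := by
    refine integral_eq_zero_of_hasDerivAt_of_integrable (f := fun x => p x * g x)
      (fun x => ?_) (hpg'.sub hpgx) (hgi.gaussianPDFReal_mul hv)
    refine ((hasDerivAt_gaussianPDFReal 0 v x).mul (hg x)).congr_deriv ?_
    simp only [p]
    ring
  rw [integral_sub hpg' hpgx, integral_const_mul, sub_eq_zero] at hibp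
  simp only [integral_gaussianReal_eq_integral_smul hv, smul_eq_mul]
  rw [hibp, ← mul_assoc, mul_inv_cancel₀ (by exact_mod_cast hv), one_mul]

theorem gaussianReal_stein_of_lipschitz (v : ℝ≥0) {g : ℝ → ℝ} {K : ℝ≥0}
    (hg : Differentiable ℝ g) (hgK : LipschitzWith K g) :
    v * ∫ x, deriv g x ∂gaussianReal 0 v = ∫ x, g x * x ∂gaussianReal 0 v := by
  have hid : MemLp id 2 (gaussianReal 0 v) := memLp_id_gaussianReal 2
  refine gaussianReal_stein v (fun x => (hg x).hasDerivAt) ?_ ?_ ?_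
  · exact Integrable.of_bound (measurable_deriv g).aestronglyMeasurable K
      (ae_of_all _ fun x => norm_deriv_le_of_lipschitz hgK)
  · exact (hgK.memLp_of_memLp_id (hid.mono_exponent one_le_two)).integrable le_rfl
  · exact hgK.integrable_smul_id hid

theorem gaussianReal_stein_along_line {E : Type*} [NormedAddCommGroup E] [NormedSpace ℝ E]
    {f : E → ℝ} {K : ℝ≥0} (hf : Differentiable ℝ f) (hfK : LipschitzWith K f) (v : ℝ≥0)
    (z u : E) :
    v * ∫ t, fderiv ℝ f (z + t • u) u ∂gaussianReal 0 v
      = ∫ t, f (z + t • u) * t ∂gaussianReal 0 v := by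
  have hline : ∀ t : ℝ, HasDerivAt (fun s : ℝ => z + s • u) u t := fun t => by
    simpa using ((hasDerivAt_id t).smul_const u).const_add z
  have hderiv : ∀ t, HasDerivAt (fun s => f (z + s • u)) (fderiv ℝ f (z + t • u) u) t :=
    fun t => (hf _).hasFDerivAt.comp_hasDerivAt t (hline t)
  have hlip : LipschitzWith ‖u‖₊ (fun s : ℝ => z + s • u) :=
    LipschitzWith.of_dist_le_mul fun t s => by
      rw [dist_add_left, dist_eq_norm, ← sub_smul, norm_smul, Real.dist_eq, mul_comm]
      rfl
  rw [← gaussianReal_stein_of_lipschitz v (fun t => (hderiv t).differentiableAt) (hfK.comp hlip)]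
  simp_rw [(hderiv _).deriv]

end ProbabilityTheory

section Euclidean

variable {ι : Type*} [DecidableEq ι]

theorem EuclideanSpace.gradient_apply [Fintype ι] (f : EuclideanSpace ℝ ι → ℝ)
    (z : EuclideanSpace ℝ ι) (i : ι) :
    gradient f z i = fderiv ℝ f z (EuclideanSpace.single i 1) := by
  rw [← toDual_gradient, InnerProductSpace.toDual_apply_apply, EuclideanSpace.inner_single_right]
  simp

theorem EuclideanSpace.toLp_update (x : ι → ℝ) (i : ι) (t : ℝ) :
    WithLp.toLp 2 (update x i t)
      = WithLp.toLp 2 (update x i 0) + t • EuclideanSpace.single i 1 := by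
  ext j
  rcases eq_or_ne j i with rfl | hj <;> simp [*]

end Euclidean

-- `gaussE` writes the variance as `⟨σ ^ 2, _⟩ : {r // 0 ≤ r}`, which is not syntactically `ℝ≥0`,
-- so instance search misses `instIsProbabilityMeasureGaussianReal` there.
instance isProbabilityMeasure_gaussianReal_mk (m x : ℝ) (hx : 0 ≤ x) :
    IsProbabilityMeasure (gaussianReal m ⟨x, hx⟩) :=
  instIsProbabilityMeasureGaussianReal m _

instance isProbabilityMeasure_gaussE (d : ℕ) (σ : ℝ) : IsProbabilityMeasure (gaussE d σ) :=
  Measure.isProbabilityMeasure_map (MeasurableEquiv.toLp 2 _).measurable.aemeasurable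

theorem memLp_two_id_gaussE (d : ℕ) (σ : ℝ) : MemLp id 2 (gaussE d σ) := by
  refine memLp_piLp_iff.2 fun i => ?_
  rw [gaussE, memLp_map_measure_iff (by fun_prop) (by fun_prop)]
  exact (memLp_id_gaussianReal 2).comp_measurePreserving (measurePreserving_eval _ i)

theorem gaussE_stein_coord {d : ℕ} (σ : ℝ) {f : EuclideanSpace ℝ (Fin d) → ℝ} {K : ℝ≥0}
    (hf : Differentiable ℝ f) (hfK : LipschitzWith K f) (i : Fin d) :
    σ ^ 2 * ∫ z, fderiv ℝ f z (EuclideanSpace.single i 1) ∂gaussE d σ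
      = ∫ z, f z * z i ∂gaussE d σ := by
  have hA := hfK.integrable_fderiv_apply (μ := gaussE d σ) (EuclideanSpace.single i 1)
  have hB : Integrable (fun z => f z * z i) (gaussE d σ) := by
    simpa using (hfK.integrable_smul_id (memLp_two_id_gaussE d σ)).eval_piLp i
  rw [gaussE, integrable_map_equiv] at hA hB
  simp only [comp_def] at hA hB
  rw [gaussE, integral_map_equiv, integral_map_equiv,
    integral_pi_eq_integral_integral_update _ i hA, integral_pi_eq_integral_integral_update _ i hB,
    ← integral_const_mul]
  refine integral_congr_ae (ae_of_all _ fun x => ?_)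
  have key := gaussianReal_stein_along_line hf hfK ⟨σ ^ 2, sq_nonneg σ⟩
    (WithLp.toLp 2 (update x i 0)) (EuclideanSpace.single i 1)
  simp only [← EuclideanSpace.toLp_update] at key
  simp only [MeasurableEquiv.toLp_apply, PiLp.toLp_apply, update_self]
  exact key

theorem stmt3_general (d : ℕ) (σ L : ℝ)
    (f : EuclideanSpace ℝ (Fin d) → ℝ) (hf : Differentiable ℝ f)
    (hLip : ∀ z z' : EuclideanSpace ℝ (Fin d), |f z - f z'| ≤ L * ‖z - z'‖) :
    σ ^ 2 • (∫ z, gradient f z ∂(gaussE d σ)) = ∫ z, f z • z ∂(gaussE d σ) := by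
  have hfK : LipschitzWith L.toNNReal f := LipschitzWith.of_dist_le_mul fun z z' => by
    rw [Real.dist_eq, dist_eq_norm]
    exact (hLip z z').trans (by gcongr; exact Real.le_coe_toNNReal L)
  have hgrad (i : Fin d) : Integrable (fun z => gradient f z i) (gaussE d σ) := by
    simpa only [EuclideanSpace.gradient_apply] using hfK.integrable_fderiv_apply _
  ext i
  rw [PiLp.smul_apply, eval_integral_piLp hgrad,
    eval_integral_piLp (hfK.integrable_smul_id (memLp_two_id_gaussE d σ)).eval_piLp]
  simpa only [EuclideanSpace.gradient_apply, PiLp.smul_apply, smul_eq_mul]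
    using gaussE_stein_coord σ hf hfK i

/-- Multivariate Stein's lemma for the isotropic Gaussian: for differentiable
`L`-Lipschitz `f : ℝ^d → ℝ`, `σ² ∫ ∇f(z) dγ_σ(z) = ∫ f(z) • z dγ_σ(z)`. -/
theorem stmt3 (d : ℕ) (hd : 1 ≤ d) (σ L : ℝ) (hσ : 0 < σ) (hL : 0 ≤ L)
    (f : EuclideanSpace ℝ (Fin d) → ℝ) (hf : Differentiable ℝ f)
    (hLip : ∀ z z' : EuclideanSpace ℝ (Fin d), |f z - f z'| ≤ L * ‖z - z'‖) :
    σ ^ 2 • (∫ z, gradient f z ∂(gaussE d σ)) = ∫ z, f z • z ∂(gaussE d σ) :=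
  stmt3_general d σ L f hf hLip
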